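/- arXiv:1703.08968 — 5 statements merged into one kernel-verified Lean document; each statement's English description precedes it below -/
import Mathlib

section
/- (Transitivity of betweenness, first part) In a composite projection system with modified distance functions d^∢ satisfying the Behrstock inequality with constant κ and the coarse triangle inequality with error κ: if d^∢_Y(X,Z) > 2κ and d^∢_Z(Y,T) > 2κ, then Z ∈ Act(X) and d^∢_Z(X,T) ≥ d^∢_Z(Y,T) − 2κ. -/
/-- A composite projection system with `m` coordinates. -/
structure CPS (m : ℕ) where
  Y : Type
  coord : Y → Fin m
  Act : Y → Set Y
  d : Y → Y → Y → ℝ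
  κ : ℝ
  Θ : ℝ
  κ_pos : 0 < κ
  κ_le_Θ : κ ≤ Θ
  same_coord_act : ∀ X Z, coord X = coord Z → Z ∈ Act X
  act_symm : ∀ X Z, X ∈ Act Z ↔ Z ∈ Act X
  d_symm : ∀ y x z, d y x z = d y z x
  d_tri : ∀ y x z w, d y x z + d y z w ≥ d y x w - κ
  behrstock : ∀ y x z, x ∈ Act y → z ∈ Act y → y ∈ Act x → z ∈ Act x →
    min (d y x z) (d x y z) ≤ κ
  inaction : ∀ x z y, x ∉ Act z → y ∈ Act x → y ∈ Act z → d y x z ≤ κ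
  properness : ∀ i x z, coord x = i → coord z = i →
    Set.Finite {y | coord y = i ∧ d y x z > Θ}
  finite_filling : ∀ Z : Set Y, ∃ F : Set Y, F.Finite ∧ F ⊆ Z ∧
    (⋃ X ∈ Z, Act X) ⊆ ⋃ X ∈ F, Act X

/-- Transitivity of betweenness, first part: if `d^∢_Y(X,Z) > 2κ` and
`d^∢_Z(Y,T) > 2κ`, then `Z ∈ Act(X)` and `d^∢_Z(X,T) ≥ d^∢_Z(Y,T) − 2κ`. -/
theorem betweenness_transitive_first {m : ℕ} (S : CPS m) (Ypt X Z T : S.Y)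
    (hX : X ∈ S.Act Ypt) (hZ : Z ∈ S.Act Ypt)
    (hY : Ypt ∈ S.Act Z) (hT : T ∈ S.Act Z)
    (h1 : S.d Ypt X Z > 2 * S.κ) (h2 : S.d Z Ypt T > 2 * S.κ) :
    Z ∈ S.Act X ∧ S.d Z X T ≥ S.d Z Ypt T - 2 * S.κ := by
  have hκ := S.κ_pos
  have hZX : Z ∈ S.Act X := by
    by_contra hc
    have hXZ : X ∉ S.Act Z := fun h => hc ((S.act_symm X Z).mp h)
    have := S.inaction X Z Ypt hXZ ((S.act_symm Ypt X).mpr hX) hY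
    linarith
  refine ⟨hZX, ?_⟩
  have hXinZ : X ∈ S.Act Z := (S.act_symm X Z).mpr hZX
  have hb := S.behrstock Ypt Z X hZ hX hY hXinZ
  have hYX : S.d Ypt Z X > 2 * S.κ := by rw [S.d_symm]; exact h1
  have hZYX : S.d Z Ypt X ≤ S.κ := by
    rcases min_le_iff.mp hb with h | h
    · linarith
    · exact h
  have ht := S.d_tri Z Ypt X T
  linarith
end

section
/- (Transfer in a coordinate) Let Γ_X be a subgroup of the stabilizer of X with proper isotropy, and let F = F(10κ) be the finite set witnessing proper isotropy at level 10κ. Then for all Y ∈ Act(X), all X' that lies either in Act(Y) or in Act(X), and all γ ∈ Γ_X ∖ F: either d^∢_Y(X', X) ≤ κ or d^∢_Y(γX', X) ≤ κ. -/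
/-- An action of a group `G` by automorphisms of a composite projection system. -/
structure CPSAction (m : ℕ) (S : CPS m) (G : Type) [Group G] where
  smul : G → S.Y → S.Y
  one_smul : ∀ y, smul 1 y = y
  mul_smul : ∀ g h y, smul (g * h) y = smul g (smul h y)
  coord_smul : ∀ g y, S.coord (smul g y) = S.coord y
  act_smul : ∀ g x y, x ∈ S.Act y ↔ smul g x ∈ S.Act (smul g y)
  d_smul : ∀ g y x z, S.d (smul g y) (smul g x) (smul g z) = S.d y x z

/-- `Γ ≤ Stab(X)` has proper isotropy. -/
def CPSAction.ProperIsotropy {m : ℕ} {S : CPS m} {G : Type} [Group G]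
    (A : CPSAction m S G) (Γ : Subgroup G) (X : S.Y) : Prop :=
  (∀ g ∈ Γ, A.smul g X = X) ∧
  ∀ N : ℝ, 0 < N → ∃ F : Set G, F.Finite ∧ F ⊆ Γ ∧
    ∀ γ ∈ Γ, γ ∉ F → ∀ y ∈ S.Act X, S.d X y (A.smul γ y) > N

/-- `g` is a rotation around `X`. -/
def CPSAction.IsRotation {m : ℕ} {S : CPS m} {G : Type} [Group G]
    (A : CPSAction m S G) (g : G) (X : S.Y) : Prop :=
  A.smul g X = X ∧ ∀ y, y ∉ S.Act X → A.smul g y = y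

/-- Transfer in a coordinate: with `F = F(10κ)` the finite set witnessing proper
isotropy of `Γ_X` at level `10κ`, for all `Y ∈ Act(X)`, all `X'` lying either in
`Act(Y)` or in `Act(X)`, and all `γ ∈ Γ_X ∖ F`, either `d^∢_Y(X',X) ≤ κ` or
`d^∢_Y(γX',X) ≤ κ`. -/
theorem transfer_in_a_coordinate {m : ℕ} (S : CPS m) (G : Type) [Group G]
    (A : CPSAction m S G) (Γ : Subgroup G) (X : S.Y)
    (hstab : ∀ g ∈ Γ, A.smul g X = X)
    (hPI : A.ProperIsotropy Γ X)
    (F : Set G) (hFfin : F.Finite) (hFΓ : F ⊆ Γ)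
    (hF : ∀ γ ∈ Γ, γ ∉ F → ∀ y ∈ S.Act X, S.d X y (A.smul γ y) > 10 * S.κ) :
    ∀ Ypt ∈ S.Act X, ∀ X' : S.Y, (X' ∈ S.Act Ypt ∨ X' ∈ S.Act X) →
      ∀ γ ∈ Γ, γ ∉ F →
        S.d Ypt X' X ≤ S.κ ∨ S.d Ypt (A.smul γ X') X ≤ S.κ := by
  intro Ypt hY X' hX' γ hγΓ hγF
  by_cases hXX' : X' ∈ S.Act X
  · -- main case: X' ∈ Act X
    have hγX' : A.smul γ X' ∈ S.Act X := by
      have := (A.act_smul γ X' X).mp hXX'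
      rwa [hstab γ hγΓ] at this
    by_contra hcon
    push_neg at hcon
    obtain ⟨h1, h2⟩ := hcon
    -- claim: d_X Ypt X' ≤ κ
    have key : ∀ Z : S.Y, Z ∈ S.Act X → S.κ < S.d Ypt Z X → S.d X Ypt Z ≤ S.κ := by
      intro Z hZ hd
      by_cases hZY : Z ∈ S.Act Ypt
      · have hb := S.behrstock Ypt X Z ((S.act_symm X Ypt).mpr hY) hZY hY hZ
        rcases min_le_iff.mp hb with h | h
        · rw [S.d_symm] at h; exact absurd h (not_le.mpr hd)
        · exact h
      · exact S.inaction Ypt Z X (fun h => hZY ((S.act_symm Ypt Z).mp h))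
          ((S.act_symm X Ypt).mpr hY) ((S.act_symm X Z).mpr hZ)
    have k1 := key X' hXX' h1
    have k2 := key (A.smul γ X') hγX' h2
    have htri := S.d_tri X X' Ypt (A.smul γ X')
    have hbig := hF γ hγΓ hγF X' hXX'
    rw [S.d_symm X X' Ypt] at htri
    have hκ := S.κ_pos
    linarith
  · -- X' ∉ Act X: inaction gives left disjunct
    have hXY' : X' ∈ S.Act Ypt := hX'.resolve_right hXX'
    exact Or.inl (S.inaction X' X Ypt hXX' ((S.act_symm Ypt X').mpr hXY') hY)
end

section
/- (Induced order is well-defined) Under the hypotheses of the induced-order proposition (X, Z ∈ 𝕐_* with Z ∈ Act(X), Γ_X, Γ_Z infinite with proper isotropy, M ≥ Θ + 12κ), the partial order on 𝕐^i_M(X,Z) obtained as the BBF order on 𝕐^i_{M−4κ}(γ_X X^i, γ_Z Z^i), for arbitrary X^i, Z^i ∈ 𝕐_i and almost all γ_X ∈ Γ_X, γ_Z ∈ Γ_Z, does not depend on the choice of X^i, Z^i: if two choices gave Y₁ <̇ Y₂ and Y₂ <̇ Y₁ respectively, then d^∢_{Y₁}(X,Z) ≤ 11κ, contradicting Y₁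 ∈ 𝕐^i_M(X,Z). -/
/-- Key orbit estimate: for almost all `γ` in a group with proper isotropy
fixing `X`, the projection `d_{Y₁}(X, γ·W)` is at most `κ`, for any `W` in the
coordinate of `Y₁`. -/
lemma key_orbit_estimate {m : ℕ} {S : CPS m} {G : Type} [Group G]
    (A : CPSAction m S G) (X : S.Y) (Γ : Subgroup G)
    (hPI : A.ProperIsotropy Γ X) (Y₁ W : S.Y)
    (hY₁X : Y₁ ∈ S.Act X) (hc : S.coord W = S.coord Y₁) :
    ∃ F : Set G, F.Finite ∧ F ⊆ Γ ∧
      ∀ γ ∈ Γ, γ ∉ F → S.d Y₁ X (A.smul γ W) ≤ S.κ := by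
  obtain ⟨hfix, hprop⟩ := hPI
  set N : ℝ := max 1 (S.d X W Y₁ + 2 * S.κ + 1) with hN
  have hN0 : 0 < N := lt_of_lt_of_le one_pos (le_max_left _ _)
  obtain ⟨F, hFfin, hFsub, hF⟩ := hprop N hN0
  refine ⟨F, hFfin, hFsub, fun γ hγ hγF => ?_⟩
  set W' := A.smul γ W with hW'
  have hcW' : S.coord W' = S.coord Y₁ := by rw [hW', A.coord_smul]; exact hc
  have hW'Y₁ : W' ∈ S.Act Y₁ := S.same_coord_act Y₁ W' hcW'.symm
  have hY₁W' : Y₁ ∈ S.Act W' := (S.act_symm Y₁ W').mpr hW'Y₁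
  have hXY₁ : X ∈ S.Act Y₁ := (S.act_symm X Y₁).mpr hY₁X
  by_cases hWX : W' ∈ S.Act X
  · have hbeh := S.behrstock Y₁ X W' hXY₁ hW'Y₁ hY₁X hWX
    rcases le_or_gt (S.d Y₁ X W') S.κ with h | h
    · exact h
    · exfalso
      have h2 : S.d X Y₁ W' ≤ S.κ := by
        rcases min_le_iff.mp hbeh with h' | h'
        · linarith
        · exact h'
      have htri := S.d_tri X Y₁ W' (A.smul γ Y₁)
      have hdW : S.d X W' (A.smul γ Y₁) = S.d X W Y₁ := by
        conv_lhs => rw [← hfix γ hγ]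
        rw [hW', A.d_smul]
      have hbig : S.d X Y₁ (A.smul γ Y₁) > N := hF γ hγ hγF Y₁ hY₁X
      have hNle : S.d X W Y₁ + 2 * S.κ + 1 ≤ N := le_max_right _ _
      linarith
  · have := S.inaction W' X Y₁ hWX hY₁W' hY₁X
    rwa [S.d_symm] at this

/-- The induced order is well defined: under the hypotheses of the induced-order
proposition, the order on `𝕐^i_M(X,Z)` does not depend on the choice of the
reference points `X^i, Z^i ∈ 𝕐_i`.  Here `Y₁ <̇_a Y₂` for the choice `(Xₐ,Zₐ)`
means `d_{Y₁}(Y₂, γ_Z Zₐ) ≤ κ`, and `Y₂ <̇_b Y₁` for the choice `(X_b,Z_b)` means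
`d_{Y₁}(Y₂, γ_X X_b) ≤ κ`; the two cannot hold simultaneously for almost all
`γ_X ∈ Γ_X`, `γ_Z ∈ Γ_Z`, since they would force `d^∢_{Y₁}(X,Z) ≤ 11κ`,
contradicting `Y₁ ∈ 𝕐^i_M(X,Z)`. -/
theorem induced_order_well_defined {m : ℕ} (S : CPS m) (G : Type) [Group G]
    (A : CPSAction m S G) (X Z : S.Y) (hZX : Z ∈ S.Act X)
    (ΓX ΓZ : Subgroup G)
    (hinfX : (ΓX : Set G).Infinite) (hinfZ : (ΓZ : Set G).Infinite)
    (hPIX : A.ProperIsotropy ΓX X) (hPIZ : A.ProperIsotropy ΓZ Z)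
    (i : Fin m) (M : ℝ) (hM : M ≥ S.Θ + 12 * S.κ)
    (Y₁ Y₂ : S.Y)
    (hY₁ : S.coord Y₁ = i ∧ Y₁ ∈ S.Act X ∧ Y₁ ∈ S.Act Z ∧ S.d Y₁ X Z ≥ M)
    (hY₂ : S.coord Y₂ = i ∧ Y₂ ∈ S.Act X ∧ Y₂ ∈ S.Act Z ∧ S.d Y₂ X Z ≥ M)
    (Xa Za Xb Zb : S.Y)
    (hXa : S.coord Xa = i) (hZa : S.coord Za = i)
    (hXb : S.coord Xb = i) (hZb : S.coord Zb = i) :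
    ∃ FX FZ : Set G, FX.Finite ∧ FZ.Finite ∧ FX ⊆ ΓX ∧ FZ ⊆ ΓZ ∧
      ∀ γX ∈ ΓX, γX ∉ FX → ∀ γZ ∈ ΓZ, γZ ∉ FZ →
        ¬ (S.d Y₁ Y₂ (A.smul γZ Za) ≤ S.κ ∧ S.d Y₁ Y₂ (A.smul γX Xb) ≤ S.κ) := by
  obtain ⟨hc₁, hY₁X, hY₁Z, hdY₁⟩ := hY₁
  obtain ⟨FX, hFXfin, hFXsub, hFX⟩ :=
    key_orbit_estimate A X ΓX hPIX Y₁ Xb hY₁X (by rw [hXb, hc₁])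
  obtain ⟨FZ, hFZfin, hFZsub, hFZ⟩ :=
    key_orbit_estimate A Z ΓZ hPIZ Y₁ Za hY₁Z (by rw [hZa, hc₁])
  refine ⟨FX, FZ, hFXfin, hFZfin, hFXsub, hFZsub,
    fun γX hγX hγXF γZ hγZ hγZF ⟨ha, hb⟩ => ?_⟩
  have h1 : S.d Y₁ X (A.smul γX Xb) ≤ S.κ := hFX γX hγX hγXF
  have h2 : S.d Y₁ Z (A.smul γZ Za) ≤ S.κ := hFZ γZ hγZ hγZF
  have t1 := S.d_tri Y₁ X (A.smul γX Xb) Z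
  have t2 := S.d_tri Y₁ (A.smul γX Xb) Y₂ Z
  have t3 := S.d_tri Y₁ Y₂ (A.smul γZ Za) Z
  have s1 : S.d Y₁ (A.smul γX Xb) Y₂ = S.d Y₁ Y₂ (A.smul γX Xb) := S.d_symm _ _ _
  have s2 : S.d Y₁ (A.smul γZ Za) Z = S.d Y₁ Z (A.smul γZ Za) := S.d_symm _ _ _
  have hκ := S.κ_pos
  have hκΘ := S.κ_le_Θ
  linarith
end

section
/- (Connectedness of windmill coordinates) In a composite windmill 𝒲 = (𝒲₁,…,𝒲_m, G_W, j₀), for every i with 𝒲ᵢ ≠ ∅, the set 𝒲ᵢ is connected as a subgraph of the projection complex 𝒫_K(𝕐ᵢ), provided K exceeds the maximum of the convexity constants ℒ. -/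
/-- Adjacency in the projection complex `𝒫_K(𝕐ᵢ)`: two vertices of coordinate
`i` are joined by an edge iff `𝕐^i_K` between them is empty. -/
def CPS.adj {m : ℕ} (S : CPS m) (i : Fin m) (K : ℝ) (X Z : S.Y) : Prop :=
  ∀ Yv, S.coord Yv = i → X ∈ S.Act Yv → Z ∈ S.Act Yv → ¬ (S.d Yv X Z ≥ K)

/-! The BBF path joining two points `X, X'` of `𝒲ᵢ` runs through `𝕐^i_K(X, X') ⊆ 𝕐^i_L(X, X')`,
and `L`-convexity puts all of `𝕐^i_L(X, X')` inside `𝒲ᵢ`. -/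

namespace CPS

variable {m : ℕ} (S : CPS m) (i : Fin m)

theorem mem_of_large_projection {K L : ℝ} (hLK : L ≤ K) {W : Set S.Y}
    (hconv : ∀ X ∈ W, ∀ Z ∈ W, ∀ Yv, S.coord Yv = i →
      X ∈ S.Act Yv → Z ∈ S.Act Yv → S.d Yv X Z ≥ L → Yv ∈ W)
    {X X' : S.Y} (hX : X ∈ W) (hX' : X' ∈ W) {Yv : S.Y}
    (hYv : Yv = X ∨ Yv = X' ∨
      (S.coord Yv = i ∧ Yv ∈ S.Act X ∧ Yv ∈ S.Act X' ∧ S.d Yv X X' ≥ K)) :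
    Yv ∈ W := by
  rcases hYv with rfl | rfl | ⟨hi, hYX, hYX', hd⟩
  · exact hX
  · exact hX'
  · exact hconv X hX X' hX' Yv hi ((S.act_symm X Yv).mpr hYX) ((S.act_symm X' Yv).mpr hYX')
      (hLK.trans hd)

end CPS

theorem windmill_coordinate_connected_general {m : ℕ} (S : CPS m) (i : Fin m)
    (K L : ℝ) (hLK : L < K)
    (Wi : Set S.Y) (hWi : ∀ X ∈ Wi, S.coord X = i)
    (hconv : ∀ X ∈ Wi, ∀ Z ∈ Wi, ∀ Yv, S.coord Yv = i →
      X ∈ S.Act Yv → Z ∈ S.Act Yv → S.d Yv X Z ≥ L → Yv ∈ Wi)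
    (hBBF : ∀ X X' : S.Y, S.coord X = i → S.coord X' = i →
      Relation.ReflTransGen
        (fun a b =>
          (a = X ∨ a = X' ∨ (S.coord a = i ∧ a ∈ S.Act X ∧ a ∈ S.Act X' ∧
            S.d a X X' ≥ K)) ∧
          (b = X ∨ b = X' ∨ (S.coord b = i ∧ b ∈ S.Act X ∧ b ∈ S.Act X' ∧
            S.d b X X' ≥ K)) ∧ S.adj i K a b) X X') :
    ∀ X ∈ Wi, ∀ X' ∈ Wi,
      Relation.ReflTransGen
        (fun a b => a ∈ Wi ∧ b ∈ Wi ∧ S.adj i K a b) X X' := by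
  intro X hX X' hX'
  refine Relation.ReflTransGen.mono (fun a b ⟨ha, hb, hab⟩ => ?_) X X'
    (hBBF X X' (hWi X hX) (hWi X' hX'))
  exact ⟨S.mem_of_large_projection i hLK.le hconv hX hX' ha,
    S.mem_of_large_projection i hLK.le hconv hX hX' hb, hab⟩

/-- Connectedness of windmill coordinates: if `𝒲ᵢ ⊆ 𝕐ᵢ` is convex with constant
`L` in coordinate `i` and `L < K`, then (using the BBF fact that any two vertices
of `𝒫_K(𝕐ᵢ)` are joined by a path whose interior vertices lie in `𝕐^i_K` of the
endpoints) any two points of `𝒲ᵢ` are joined by a path inside `𝒲ᵢ`. -/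
theorem windmill_coordinate_connected {m : ℕ} (S : CPS m) (i : Fin m)
    (K L : ℝ) (hLK : L < K)
    (Wi : Set S.Y) (hWi : ∀ X ∈ Wi, S.coord X = i) (hne : Wi.Nonempty)
    (hconv : ∀ X ∈ Wi, ∀ Z ∈ Wi, ∀ Yv, S.coord Yv = i →
      X ∈ S.Act Yv → Z ∈ S.Act Yv → S.d Yv X Z ≥ L → Yv ∈ Wi)
    (hBBF : ∀ X X' : S.Y, S.coord X = i → S.coord X' = i →
      Relation.ReflTransGen
        (fun a b =>
          (a = X ∨ a = X' ∨ (S.coord a = i ∧ a ∈ S.Act X ∧ a ∈ S.Act X' ∧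
            S.d a X X' ≥ K)) ∧
          (b = X ∨ b = X' ∨ (S.coord b = i ∧ b ∈ S.Act X ∧ b ∈ S.Act X' ∧
            S.d b X X' ≥ K)) ∧ S.adj i K a b) X X') :
    ∀ X ∈ Wi, ∀ X' ∈ Wi,
      Relation.ReflTransGen
        (fun a b => a ∈ Wi ∧ b ∈ Wi ∧ S.adj i K a b) X X' :=
  windmill_coordinate_connected_general S i K L hLK Wi hWi hconv hBBF
end

section
/- (Injectivity via large projections) In a single coordinate of a composite projection system, suppose R₁, …, R_N and points X₀, X_N satisfy: for all consecutive triples the induction hypotheses d_{R_k}(R_{k−2j}, R_{k+2i}) ≥ Θ_Rot − 2Θ_P − κ hold for i = j = 1. Then by the monotonicity property and Behrstock inequality, d_{R_1}(X₀, X_N) ≥ Θ_Rot − 2Θ_P − κ. In particular, if Θ_Rot > 3Θ_P + κ and X₀, X_N lie in a Θ_P-convex set not containing R₁, this is a contradiction; hence no nontrivial loop exists in the principal coordinate tree. -/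
/-- Injectivity via large projections, in a single coordinate.  Given modified
projection functions `d` satisfying the coarse triangle inequality, the
Behrstock inequality and monotonicity, and a sequence `A 0, A 1, …, A n`
(alternating points and osculators along a path of the principal tree) such
that every consecutive triple satisfies the base inequality
`d (A k) (A (k−1)) (A (k+1)) ≥ Θ_Rot − 2Θ_P − κ`, the induction via
monotonicity and Behrstock yields `d (A 1) (A 0) (A n) ≥ Θ_Rot − 2Θ_P − κ`.
In particular, if `Θ_Rot > 3Θ_P + κ` and `A 0, A n` lie in a `Θ_P`-convex set
not containing `A 1` (so that `d (A 1) (A 0) (A n) ≤ Θ_P`), this is a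
contradiction; hence no nontrivial loop exists in the principal coordinate
tree. -/
theorem injectivity_via_large_projections
    {Y : Type} (d : Y → Y → Y → ℝ) (κ Θ ΘP ΘRot : ℝ)
    (hκ : 0 < κ) (hκΘ : κ ≤ Θ) (hΘP : Θ ≤ ΘP)
    (hbig : ΘRot - 2 * ΘP - 3 * κ ≥ Θ)
    (dsymm : ∀ y x z, d y x z = d y z x)
    (dtri : ∀ y x z w, d y x z + d y z w ≥ d y x w - κ)
    (behrstock : ∀ y x z, min (d y x z) (d x y z) ≤ κ)
    (mono : ∀ y x z w, d y x z ≥ Θ → d w x y ≤ d w x z ∧ d w z y ≤ d w x z)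
    (n : ℕ) (hn : 2 ≤ n) (A : ℕ → Y)
    (htriple : ∀ k, 1 ≤ k → k + 1 ≤ n →
      d (A k) (A (k - 1)) (A (k + 1)) ≥ ΘRot - 2 * ΘP - κ) :
    d (A 1) (A 0) (A n) ≥ ΘRot - 2 * ΘP - κ ∧
      (ΘRot > 3 * ΘP + κ → ¬ (d (A 1) (A 0) (A n) ≤ ΘP)) := by

  have hself : ∀ x z : Y, d x x z ≤ κ := by
    intro x z
    have := behrstock x x z
    simpa using this
  have hT : ∀ m, 1 ≤ m → m + 1 ≤ n →
      d (A m) (A 0) (A (m + 1)) ≥ (ΘRot - 2 * ΘP - κ) - 2 * κ := by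
    intro m hm
    induction m, hm using Nat.le_induction with
    | base =>
      intro h1
      have h := htriple 1 le_rfl h1
      norm_num at h
      linarith
    | succ m hm ih =>
      intro hmn
      have ihm := ih (by omega)
      have ha : d (A m) (A 0) (A (m + 1)) ≥ Θ := by linarith
      have hb : d (A (m + 1)) (A 0) (A m) ≤ κ := by
        have h1 := (mono (A m) (A 0) (A (m + 1)) (A (m + 1)) ha).1
        have h2 : d (A (m + 1)) (A 0) (A (m + 1)) ≤ κ := by
          rw [dsymm]; exact hself _ _
        linarith
      have htp := htriple (m + 1) (by omega) (by omega)
      simp only [Nat.add_sub_cancel] at htp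
      have htri := dtri (A (m + 1)) (A m) (A 0) (A (m + 2))
      have hb' : d (A (m + 1)) (A m) (A 0) ≤ κ := by rw [dsymm]; exact hb
      show d (A (m + 1)) (A 0) (A (m + 2)) ≥ (ΘRot - 2 * ΘP - κ) - 2 * κ
      linarith
  have hchain : ∀ m, 2 ≤ m → m ≤ n → d (A 1) (A 0) (A m) ≥ ΘRot - 2 * ΘP - κ := by
    intro m hm
    induction m, hm using Nat.le_induction with
    | base =>
      intro h2
      have h := htriple 1 le_rfl h2
      norm_num at h
      linarith
    | succ m hm ih =>
      intro hmn
      have ha : d (A m) (A 0) (A (m + 1)) ≥ Θ := by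
        have := hT m (by omega) (by omega)
        linarith
      have hmono := (mono (A m) (A 0) (A (m + 1)) (A 1) ha).1
      have := ih (by omega)
      linarith
  have h1 := hchain n hn le_rfl
  refine ⟨h1, fun hgt hle => ?_⟩
  linarith
end
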